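/- arXiv:1611.03879 — 6 statements merged into one kernel-verified Lean document; each statement's English description precedes it below -/
import Mathlib

section
/- For any two real I × J matrices W and W̃ with singular values S_{11} ≥ S_{22} ≥ … and S̃_{11} ≥ S̃_{22} ≥ … listed in decreasing order, the squared Frobenius norm of their difference satisfies ‖W − W̃‖_F² ≥ Σ_i (S_{ii} − S̃_{ii})². -/
/-!
Expanding both squares reduces the inequality to `‖W‖_F² = ∑ S_j²` (the trace of `WᵀW`) and to
von Neumann's trace inequality `⟨W, W'⟩_F ≤ ∑ S_j S'_j`. For the latter take orthonormal eigenbases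
`v`, `v'` of `WᵀW`, `W'ᵀW'` and the left singular vectors `u_j = W v_j / S_j`. Then
`⟨W, W'⟩_F = ∑ S_j S'_k ⟨v_j, v'_k⟩ ⟨u_j, u'_k⟩`, and AM-GM bounds this by the mean of
`∑ S_j S'_k Q_jk` over `Q = (⟨v_j, v'_k⟩²)` and `Q = (⟨u_j, u'_k⟩²)`, which are doubly substochastic
by Bessel's inequality. For decreasing nonnegative `S`, `S'` and doubly substochastic `Q`,
`∑ S_j S'_k Q_jk ≤ ∑ S_j S'_j` by Abel summation over `k` and a bathtub bound over `j`.
-/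

open Matrix BigOperators

/-- Removed from Mathlib; restored with its old statement. -/
theorem Matrix.isHermitian_transpose_mul_self {m n α : Type*} [NonUnitalCommSemiring α] [StarRing α]
    [TrivialStar α] [Fintype m] (A : Matrix m n α) : (Aᵀ * A).IsHermitian := by
  rw [IsHermitian, conjTranspose_eq_transpose_of_trivial, transpose_mul, transpose_transpose]

open Finset
open scoped InnerProductSpace RealInnerProductSpace

theorem Finset.sum_mul_le_sum_of_sum_le_card {ι : Type*} [Fintype ι] (L : Finset ι)
    {s y : ι → ℝ} {c : ℝ} (hc : 0 ≤ c) (hsL : ∀ j ∈ L, c ≤ s j) (hsLc : ∀ j ∉ L, s j ≤ c)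
    (hy0 : ∀ j, 0 ≤ y j) (hy1 : ∀ j, y j ≤ 1) (hy : ∑ j, y j ≤ #L) :
    ∑ j, s j * y j ≤ ∑ j ∈ L, s j := by
  classical
  have hpoint : ∀ j, s j * y j - (if j ∈ L then s j else 0) ≤
      c * (y j - if j ∈ L then 1 else 0) := by
    intro j
    split_ifs with hj
    · nlinarith [hsL j hj, hy1 j]
    · nlinarith [hsLc j hj, hy0 j]
  have hsum := sum_le_sum fun j (_ : j ∈ univ) => hpoint j
  simp only [sum_sub_distrib, ← mul_sum, sum_ite_mem, univ_inter, sum_const, nsmul_eq_mul,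
    mul_one] at hsum
  nlinarith

theorem Finset.sum_mul_nonneg_of_antitoneOn_of_prefix_sum_nonneg {ι : Type*} [LinearOrder ι]
    (s : Finset ι) {t D : ι → ℝ} (ht : AntitoneOn t s) (ht0 : ∀ k ∈ s, 0 ≤ t k)
    (hD : ∀ b ∈ s, 0 ≤ ∑ k ∈ s with k ≤ b, D k) :
    0 ≤ ∑ k ∈ s, t k * D k := by
  induction s using Finset.induction_on_max generalizing t with
  | empty => simp
  | insert a s ha ih =>
    have ha' : a ∉ s := fun h => lt_irrefl a (ha a h)
    have hmem : a ∈ insert a s := mem_insert_self a s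
    have htotal : 0 ≤ D a + ∑ k ∈ s, D k := by
      have := hD a hmem
      rwa [filter_true_of_mem fun k hk => ?_, sum_insert ha'] at this
      rcases mem_insert.mp hk with rfl | hk
      exacts [le_rfl, (ha k hk).le]
    have hrest : 0 ≤ ∑ k ∈ s, (t k - t a) * D k := by
      refine ih (fun i hi j hj hij => ?_) (fun k hk => ?_) (fun b hb => ?_)
      · exact sub_le_sub_right (ht (mem_insert_of_mem hi) (mem_insert_of_mem hj) hij) _
      · exact sub_nonneg.mpr (ht (mem_insert_of_mem hk) hmem (ha k hk).le)
      · have := hD b (mem_insert_of_mem hb)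
        rwa [filter_insert, if_neg (not_le.mpr (ha b hb))] at this
    calc (0 : ℝ) ≤ ∑ k ∈ s, (t k - t a) * D k + t a * (D a + ∑ k ∈ s, D k) :=
          add_nonneg hrest (mul_nonneg (ht0 a hmem) htotal)
      _ = ∑ k ∈ insert a s, t k * D k := by
          rw [sum_insert ha', mul_add, mul_sum]
          simp only [sub_mul, sum_sub_distrib]
          ring

theorem sum_sum_mul_mul_le_sum_mul_of_substochastic {ι : Type*} [Fintype ι] [LinearOrder ι]
    {s t : ι → ℝ} (hs : Antitone s) (ht : Antitone t) (hs0 : 0 ≤ s) (ht0 : 0 ≤ t)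
    {Q : ι → ι → ℝ} (hQ : ∀ j k, 0 ≤ Q j k) (hrow : ∀ j, ∑ k, Q j k ≤ 1)
    (hcol : ∀ k, ∑ j, Q j k ≤ 1) :
    ∑ j, ∑ k, s j * t k * Q j k ≤ ∑ j, s j * t j := by
  have hprefix : ∀ b, ∑ k with k ≤ b, ∑ j, s j * Q j k ≤ ∑ k with k ≤ b, s k := by
    intro b
    rw [sum_comm]
    simp only [← mul_sum]
    refine sum_mul_le_sum_of_sum_le_card _ (hs0 b) (fun j hj => hs (mem_filter.mp hj).2)
      (fun j hj => hs (not_le.mp fun h => hj (mem_filter.mpr ⟨mem_univ j, h⟩)).le)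
      (fun j => sum_nonneg fun k _ => hQ j k)
      (fun j => (sum_le_univ_sum_of_nonneg (hQ j)).trans (hrow j)) ?_
    rw [sum_comm]
    simpa using sum_le_sum fun k (_ : k ∈ univ.filter (· ≤ b)) => hcol k
  have habel := sum_mul_nonneg_of_antitoneOn_of_prefix_sum_nonneg univ
    (D := fun k => s k - ∑ j, s j * Q j k) (ht.antitoneOn _) (fun k _ => ht0 k)
    (fun b _ => by simpa [sum_sub_distrib] using hprefix b)
  simp only [mul_sub, sum_sub_distrib, sub_nonneg] at habel
  calc ∑ j, ∑ k, s j * t k * Q j k = ∑ k, t k * ∑ j, s j * Q j k := by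
        rw [sum_comm]
        simp only [mul_sum]
        exact sum_congr rfl fun _ _ => sum_congr rfl fun _ _ => by ring
    _ ≤ ∑ j, s j * t j := by simpa only [mul_comm] using habel

theorem OrthonormalBasis.sum_inner_apply_eq_trace {𝕜 E F ι : Type*} [RCLike 𝕜] [Fintype ι]
    [NormedAddCommGroup E] [InnerProductSpace 𝕜 E] [FiniteDimensional 𝕜 E]
    [NormedAddCommGroup F] [InnerProductSpace 𝕜 F] [FiniteDimensional 𝕜 F]
    (b : OrthonormalBasis ι 𝕜 E) (T T' : E →ₗ[𝕜] F) :
    ∑ i, ⟪T (b i), T' (b i)⟫_𝕜 = LinearMap.trace 𝕜 E (T.adjoint ∘ₗ T') := by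
  simp [LinearMap.trace_eq_sum_inner _ b, LinearMap.adjoint_inner_right]

section Bessel

variable {ι F : Type*} [Fintype ι] [NormedAddCommGroup F] [InnerProductSpace ℝ F]

def IsBesselFamily (u : ι → F) : Prop :=
  ∀ x, ∑ j, ⟪u j, x⟫ ^ 2 ≤ ‖x‖ ^ 2

theorem OrthonormalBasis.isBesselFamily (b : OrthonormalBasis ι ℝ F) : IsBesselFamily b := by
  intro x
  simpa [Real.norm_eq_abs, sq_abs] using b.orthonormal.sum_inner_products_le x (s := univ)

theorem IsBesselFamily.of_orthonormal_ne_zero {u : ι → F}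
    (hu : Orthonormal ℝ fun j : {j // u j ≠ 0} => u j) : IsBesselFamily u := by
  classical
  intro x
  calc ∑ j, ⟪u j, x⟫ ^ 2 = ∑ j with u j ≠ 0, ⟪u j, x⟫ ^ 2 :=
        (sum_filter_of_ne (p := fun j => u j ≠ 0) fun j _ h hj => h (by simp [hj])).symm
    _ = ∑ j : {j // u j ≠ 0}, ⟪u j, x⟫ ^ 2 := (sum_subtype _ (by simp) _)
    _ ≤ ‖x‖ ^ 2 := by
        simpa [Real.norm_eq_abs, sq_abs] using hu.sum_inner_products_le x (s := univ)

theorem IsBesselFamily.comp_equiv {κ : Type*} [Fintype κ] {u : ι → F} (hu : IsBesselFamily u)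
    (e : κ ≃ ι) : IsBesselFamily (u ∘ e) := fun x => by
  simpa [Function.comp_apply, e.sum_comp fun j => ⟪u j, x⟫ ^ 2] using hu x

theorem IsBesselFamily.sum_inner_sq_le_one {u : ι → F} (hu : IsBesselFamily u) {x : F}
    (hx : ‖x‖ ≤ 1) : ∑ j, ⟪u j, x⟫ ^ 2 ≤ 1 :=
  (hu x).trans (pow_le_one₀ (norm_nonneg x) hx)

theorem IsBesselFamily.norm_le_one {u : ι → F} (hu : IsBesselFamily u) (j : ι) : ‖u j‖ ≤ 1 := by
  have hj : ⟪u j, u j⟫ ^ 2 ≤ ‖u j‖ ^ 2 :=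
    (single_le_sum (fun k _ => sq_nonneg ⟪u k, u j⟫) (mem_univ j)).trans (hu (u j))
  rw [real_inner_self_eq_norm_sq] at hj
  by_contra! h
  nlinarith [one_lt_pow₀ h two_ne_zero]

end Bessel

theorem sum_inner_le_sum_mul_of_singular_systems {ι E F : Type*} [Fintype ι] [LinearOrder ι]
    [NormedAddCommGroup E] [InnerProductSpace ℝ E] [NormedAddCommGroup F] [InnerProductSpace ℝ F]
    {T T' : E →ₗ[ℝ] F} {v v' : OrthonormalBasis ι ℝ E} {u u' : ι → F} {s s' : ι → ℝ}
    (hs : Antitone s) (hs' : Antitone s') (hs0 : 0 ≤ s) (hs0' : 0 ≤ s')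
    (hu : IsBesselFamily u) (hu' : IsBesselFamily u')
    (hTv : ∀ j, T (v j) = s j • u j) (hTv' : ∀ k, T' (v' k) = s' k • u' k) :
    ∑ k, ⟪T (v' k), T' (v' k)⟫ ≤ ∑ j, s j * s' j := by
  have hexpand : ∀ k, ⟪T (v' k), T' (v' k)⟫
      = ∑ j, s j * s' k * (⟪v j, v' k⟫ * ⟪u j, u' k⟫) := by
    intro k
    have hTvk : T (v' k) = ∑ j, (⟪v j, v' k⟫ * s j) • u j := by
      conv_lhs => rw [← v.sum_repr' (v' k)]
      simp only [map_sum, map_smul, hTv, smul_smul]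
    rw [hTv' k, hTvk, sum_inner]
    exact sum_congr rfl fun j _ => by rw [real_inner_smul_left, real_inner_smul_right]; ring
  have hamgm : ∀ j k, s j * s' k * (⟪v j, v' k⟫ * ⟪u j, u' k⟫)
      ≤ (s j * s' k * ⟪v j, v' k⟫ ^ 2 + s j * s' k * ⟪u j, u' k⟫ ^ 2) / 2 := by
    intro j k
    nlinarith [mul_nonneg (mul_nonneg (hs0 j) (hs0' k)) (sq_nonneg (⟪v j, v' k⟫ - ⟪u j, u' k⟫))]
  have hv := sum_sum_mul_mul_le_sum_mul_of_substochastic hs hs' hs0 hs0'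
    (Q := fun j k => ⟪v j, v' k⟫ ^ 2) (fun _ _ => sq_nonneg _)
    (fun j => by simpa only [real_inner_comm (v j)] using
      v'.isBesselFamily.sum_inner_sq_le_one (v.orthonormal.1 j).le)
    (fun k => v.isBesselFamily.sum_inner_sq_le_one (v'.orthonormal.1 k).le)
  have hu := sum_sum_mul_mul_le_sum_mul_of_substochastic hs hs' hs0 hs0'
    (Q := fun j k => ⟪u j, u' k⟫ ^ 2) (fun _ _ => sq_nonneg _)
    (fun j => by simpa only [real_inner_comm (u j)] using
      hu'.sum_inner_sq_le_one (hu.norm_le_one j))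
    (fun k => hu.sum_inner_sq_le_one (hu'.norm_le_one k))
  calc ∑ k, ⟪T (v' k), T' (v' k)⟫
      = ∑ j, ∑ k, s j * s' k * (⟪v j, v' k⟫ * ⟪u j, u' k⟫) := by
        simp only [hexpand]; exact sum_comm
    _ ≤ ∑ j, ∑ k, (s j * s' k * ⟪v j, v' k⟫ ^ 2 + s j * s' k * ⟪u j, u' k⟫ ^ 2) / 2 :=
        sum_le_sum fun j _ => sum_le_sum fun k _ => hamgm j k
    _ = (∑ j, ∑ k, s j * s' k * ⟪v j, v' k⟫ ^ 2
          + ∑ j, ∑ k, s j * s' k * ⟪u j, u' k⟫ ^ 2) / 2 := by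
        simp only [← sum_div, sum_add_distrib]
    _ ≤ ∑ j, s j * s' j := by linarith

namespace Matrix
variable {m n : Type*} [Fintype m] [Fintype n] [DecidableEq n]

theorem inner_toEuclideanLin_eigenvectorBasis (W : Matrix m n ℝ) (j k : n) :
    ⟪toEuclideanLin W ((isHermitian_transpose_mul_self W).eigenvectorBasis j),
      toEuclideanLin W ((isHermitian_transpose_mul_self W).eigenvectorBasis k)⟫
      = if j = k then (isHermitian_transpose_mul_self W).eigenvalues j else 0 := by
  classical
  set hW := isHermitian_transpose_mul_self W
  have heig : toEuclideanLin Wᵀ (toEuclideanLin W (hW.eigenvectorBasis k))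
      = hW.eigenvalues k • hW.eigenvectorBasis k := by
    ext i
    simpa [mulVec_mulVec] using congrFun (hW.mulVec_eigenvectorBasis k) i
  rw [← LinearMap.adjoint_inner_right, ← toEuclideanLin_conjTranspose_eq_adjoint,
    conjTranspose_eq_transpose_of_trivial, heig, real_inner_smul_right,
    orthonormal_iff_ite.mp hW.eigenvectorBasis.orthonormal j k]
  split_ifs with h
  · rw [h, mul_one]
  · rw [mul_zero]

theorem eigenvalues_transpose_mul_self_nonneg (W : Matrix m n ℝ) (j : n) :
    0 ≤ (isHermitian_transpose_mul_self W).eigenvalues j :=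
  eigenvalues_conjTranspose_mul_self_nonneg W j

/-- `W v_j / √λ_j`; for `λ_j = 0` the junk value `(√0)⁻¹ = 0` makes it `0`. -/
noncomputable def leftSingularVector (W : Matrix m n ℝ) (j : n) : EuclideanSpace ℝ m :=
  (√((isHermitian_transpose_mul_self W).eigenvalues j))⁻¹ •
    toEuclideanLin W ((isHermitian_transpose_mul_self W).eigenvectorBasis j)

theorem toEuclideanLin_eigenvectorBasis (W : Matrix m n ℝ) (j : n) :
    toEuclideanLin W ((isHermitian_transpose_mul_self W).eigenvectorBasis j)
      = √((isHermitian_transpose_mul_self W).eigenvalues j) • W.leftSingularVector j := by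
  rcases eq_or_ne ((isHermitian_transpose_mul_self W).eigenvalues j) 0 with h | h
  · have h0 : toEuclideanLin W ((isHermitian_transpose_mul_self W).eigenvectorBasis j) = 0 := by
      rw [← inner_self_eq_zero (𝕜 := ℝ), inner_toEuclideanLin_eigenvectorBasis, if_pos rfl, h]
    simp [h, h0]
  · rw [leftSingularVector, smul_inv_smul₀ (Real.sqrt_ne_zero'.mpr
      ((eigenvalues_transpose_mul_self_nonneg W j).lt_of_ne' h))]

theorem isBesselFamily_leftSingularVector (W : Matrix m n ℝ) :
    IsBesselFamily W.leftSingularVector := by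
  have hne : ∀ j, W.leftSingularVector j ≠ 0 →
      (isHermitian_transpose_mul_self W).eigenvalues j ≠ 0 :=
    fun j hj h => hj (by simp [leftSingularVector, h])
  have hinner : ∀ j k, (isHermitian_transpose_mul_self W).eigenvalues j ≠ 0 →
      ⟪W.leftSingularVector j, W.leftSingularVector k⟫ = if j = k then 1 else 0 := by
    intro j k hj
    simp only [leftSingularVector, real_inner_smul_left, real_inner_smul_right,
      inner_toEuclideanLin_eigenvectorBasis]
    split_ifs with hjk
    · subst hjk
      rw [← mul_assoc, ← mul_inv, Real.mul_self_sqrt (eigenvalues_transpose_mul_self_nonneg W j),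
        inv_mul_cancel₀ hj]
    · simp
  refine .of_orthonormal_ne_zero (orthonormal_iff_ite.mpr fun j k => ?_)
  simpa [Subtype.ext_iff] using hinner j k (hne j j.2)

theorem sum_sum_mul_eq_sum_inner_toEuclideanLin {ι : Type*} [Fintype ι] (W W' : Matrix m n ℝ)
    (b : OrthonormalBasis ι ℝ (EuclideanSpace ℝ n)) :
    ∑ i, ∑ j, W i j * W' i j = ∑ k, ⟪toEuclideanLin W (b k), toEuclideanLin W' (b k)⟫ := by
  rw [b.sum_inner_apply_eq_trace, ← (EuclideanSpace.basisFun n ℝ).sum_inner_apply_eq_trace,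
    sum_comm]
  refine sum_congr rfl fun j _ => ?_
  simp [EuclideanSpace.basisFun_apply, PiLp.inner_apply, mul_comm]

theorem sum_sum_sq_eq_sum_eigenvalues (W : Matrix m n ℝ) :
    ∑ i, ∑ j, W i j ^ 2 = ∑ j, (isHermitian_transpose_mul_self W).eigenvalues j := by
  simp_rw [sq]
  rw [sum_sum_mul_eq_sum_inner_toEuclideanLin W W
    (isHermitian_transpose_mul_self W).eigenvectorBasis]
  exact sum_congr rfl fun j _ => by rw [inner_toEuclideanLin_eigenvectorBasis, if_pos rfl]

theorem sum_sum_sq_eq_sum_sq_of_eq_sqrt_eigenvalues (W : Matrix m n ℝ) {S : n → ℝ}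
    (σ : Equiv.Perm n) (hσ : ∀ j, S j = √((isHermitian_transpose_mul_self W).eigenvalues (σ j))) :
    ∑ i, ∑ j, W i j ^ 2 = ∑ j, S j ^ 2 := by
  rw [sum_sum_sq_eq_sum_eigenvalues, ← Equiv.sum_comp σ]
  exact sum_congr rfl fun j _ => by
    rw [hσ, Real.sq_sqrt (eigenvalues_transpose_mul_self_nonneg W _)]

theorem sum_sum_mul_le_sum_mul_of_eq_sqrt_eigenvalues [LinearOrder n] (W W' : Matrix m n ℝ)
    {S S' : n → ℝ} (hS : Antitone S) (hS' : Antitone S') (σ σ' : Equiv.Perm n)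
    (hσ : ∀ j, S j = √((isHermitian_transpose_mul_self W).eigenvalues (σ j)))
    (hσ' : ∀ j, S' j = √((isHermitian_transpose_mul_self W').eigenvalues (σ' j))) :
    ∑ i, ∑ j, W i j * W' i j ≤ ∑ j, S j * S' j := by
  rw [sum_sum_mul_eq_sum_inner_toEuclideanLin W W'
    ((isHermitian_transpose_mul_self W').eigenvectorBasis.reindex σ'.symm)]
  refine sum_inner_le_sum_mul_of_singular_systems
    (v := (isHermitian_transpose_mul_self W).eigenvectorBasis.reindex σ.symm) hS hS'
    (fun j => (hσ j).symm ▸ Real.sqrt_nonneg _) (fun j => (hσ' j).symm ▸ Real.sqrt_nonneg _)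
    ((isBesselFamily_leftSingularVector W).comp_equiv σ)
    ((isBesselFamily_leftSingularVector W').comp_equiv σ') (fun j => ?_) (fun k => ?_)
  · rw [OrthonormalBasis.reindex_apply, Equiv.symm_symm, toEuclideanLin_eigenvectorBasis, hσ,
      Function.comp_apply]
  · rw [OrthonormalBasis.reindex_apply, Equiv.symm_symm, toEuclideanLin_eigenvectorBasis, hσ',
      Function.comp_apply]

end Matrix

/-- (Mirsky's inequality for the Frobenius norm.) For any two real
`I × J` matrices `W` and `W̃`, if `S` and `S̃` list the singular values of `W` and `W̃`
(the square roots of the eigenvalues of `WᵀW`, resp. `W̃ᵀW̃`, with multiplicity) in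
decreasing order, then `‖W − W̃‖_F² ≥ ∑ i (S_i − S̃_i)²`. -/
theorem frobenius_sq_ge_sum_singular_value_diff_sq {I J : ℕ}
    (W W' : Matrix (Fin I) (Fin J) ℝ) (S S' : Fin J → ℝ)
    (hS : Antitone S) (hS' : Antitone S')
    (hSval : ∃ σ : Equiv.Perm (Fin J), ∀ j,
      S j = Real.sqrt ((Matrix.isHermitian_transpose_mul_self W).eigenvalues (σ j)))
    (hSval' : ∃ σ : Equiv.Perm (Fin J), ∀ j,
      S' j = Real.sqrt ((Matrix.isHermitian_transpose_mul_self W').eigenvalues (σ j))) :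
    ∑ j : Fin J, (S j - S' j) ^ 2 ≤ ∑ i : Fin I, ∑ j : Fin J, (W i j - W' i j) ^ 2 := by
  obtain ⟨σ, hσ⟩ := hSval
  obtain ⟨σ', hσ'⟩ := hSval'
  have hW := W.sum_sum_sq_eq_sum_sq_of_eq_sqrt_eigenvalues σ hσ
  have hW' := W'.sum_sum_sq_eq_sum_sq_of_eq_sqrt_eigenvalues σ' hσ'
  have hWW' := W.sum_sum_mul_le_sum_mul_of_eq_sqrt_eigenvalues W' hS hS' σ σ' hσ hσ'
  simp only [sub_sq, sum_add_distrib, sum_sub_distrib, mul_assoc, ← mul_sum]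
  linarith
end

section
/- Let W be a real I × J matrix with singular value decomposition W = U S Vᵀ, and set W̃ = U S̃ Vᵀ where S̃_{ii} = min(S_{ii}, 1). Then W̃ solves the projection problem min_{M} ‖W − M‖_F subject to I − M Mᵀ being positive semidefinite: that is, for every real I × J matrix M with I − M Mᵀ positive semidefinite, ‖W − W̃‖_F ≤ ‖W − M‖_F. -/
/-! Conjugating by the orthogonal factors preserves both the Frobenius distance and the
constraint, so with `N = Uᵀ M V` the problem reduces to comparing `S` with `N` entrywise.
The constraint `1 - N Nᵀ ⪰ 0` puts every row of `N` in the unit ball, so `N i j ^ 2 ≤ 1`;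
off the diagonal `S` vanishes, and on it `min s 1` is the point of `[-1, 1]` closest to
`s ≥ 0`. -/

open Matrix BigOperators

section Isometry

variable {m m' n n' : Type*} [Fintype m] [Fintype m'] [Fintype n] [Fintype n']

theorem sum_sq_eq_trace_mul_transpose (A : Matrix m n ℝ) :
    ∑ i, ∑ j, A i j ^ 2 = trace (A * Aᵀ) := by
  simp [trace, mul_apply, sq]

variable [DecidableEq m] [DecidableEq n] {U : Matrix m' m ℝ} {V : Matrix n' n ℝ}

theorem sum_sq_mul_mul_transpose_of_isometry (hU : Uᵀ * U = 1) (hV : Vᵀ * V = 1)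
    (A : Matrix m n ℝ) :
    ∑ i, ∑ j, (U * A * Vᵀ) i j ^ 2 = ∑ i, ∑ j, A i j ^ 2 := by
  have hconj : (U * A * Vᵀ) * (U * A * Vᵀ)ᵀ = U * (A * Aᵀ * Uᵀ) := by
    rw [transpose_mul, transpose_mul, transpose_transpose, Matrix.mul_assoc,
      ← Matrix.mul_assoc Vᵀ V, hV, Matrix.one_mul, Matrix.mul_assoc, ← Matrix.mul_assoc A]
  rw [sum_sq_eq_trace_mul_transpose, sum_sq_eq_trace_mul_transpose, hconj, trace_mul_comm,
    Matrix.mul_assoc, hU, Matrix.mul_one]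

theorem sum_sq_sub_mul_mul_transpose_of_isometry (hU : Uᵀ * U = 1) (hV : Vᵀ * V = 1)
    (A B : Matrix m n ℝ) :
    ∑ i, ∑ j, ((U * A * Vᵀ) i j - (U * B * Vᵀ) i j) ^ 2 = ∑ i, ∑ j, (A i j - B i j) ^ 2 := by
  simp only [← Matrix.sub_apply, ← Matrix.mul_sub, ← Matrix.sub_mul]
  exact sum_sq_mul_mul_transpose_of_isometry hU hV (A - B)

theorem posSemidef_one_sub_mul_transpose_of_isometry [DecidableEq m'] (hU : Uᵀ * U = 1)
    (hV : Vᵀ * V = 1) {N : Matrix m n ℝ}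
    (h : (1 - (U * N * Vᵀ) * (U * N * Vᵀ)ᵀ).PosSemidef) :
    (1 - N * Nᵀ).PosSemidef := by
  have hconj : Uᴴ * (1 - (U * N * Vᵀ) * (U * N * Vᵀ)ᵀ) * U = 1 - N * Nᵀ := by
    rw [conjTranspose_eq_transpose_of_trivial, transpose_mul, transpose_mul,
      transpose_transpose, Matrix.mul_sub, Matrix.sub_mul, Matrix.mul_one, hU]
    simp only [Matrix.mul_assoc]
    rw [← Matrix.mul_assoc Vᵀ V, hV, Matrix.one_mul, ← Matrix.mul_assoc Uᵀ U, hU,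
      Matrix.one_mul, Matrix.mul_one]
  simpa only [hconj] using h.conjTranspose_mul_mul_same U

end Isometry

theorem sq_le_one_of_posSemidef_one_sub_mul_transpose {m n : Type*} [Fintype m] [Fintype n]
    [DecidableEq m] {N : Matrix m n ℝ} (h : (1 - N * Nᵀ).PosSemidef) (i : m) (j : n) :
    N i j ^ 2 ≤ 1 := by
  have hdiag : 0 ≤ 1 - ∑ k, N i k ^ 2 := by
    simpa [Matrix.sub_apply, mul_apply, sq] using h.diag_nonneg (i := i)
  have hle : N i j ^ 2 ≤ ∑ k, N i k ^ 2 :=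
    Finset.single_le_sum (fun k _ => sq_nonneg (N i k)) (Finset.mem_univ j)
  linarith

theorem sq_sub_min_one_le {s x : ℝ} (hs : 0 ≤ s) (hx : x ^ 2 ≤ 1) :
    (s - min s 1) ^ 2 ≤ (s - x) ^ 2 := by
  have hx1 : x ≤ 1 := by nlinarith
  rcases le_total s 1 with h | h
  · simpa [min_eq_left h] using sq_nonneg (s - x)
  · rw [min_eq_right h]
    nlinarith

theorem sum_sq_sub_clip_le {I J : ℕ} {S N : Matrix (Fin I) (Fin J) ℝ}
    (hSdiag : ∀ (i : Fin I) (j : Fin J), (i : ℕ) ≠ (j : ℕ) → S i j = 0)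
    (hSnn : ∀ (i : Fin I) (j : Fin J), (i : ℕ) = (j : ℕ) → 0 ≤ S i j)
    (hN : ∀ i j, N i j ^ 2 ≤ 1) :
    ∑ i, ∑ j, (S i j - (Matrix.of fun (i : Fin I) (j : Fin J) =>
        if (i : ℕ) = (j : ℕ) then min (S i j) 1 else 0) i j) ^ 2
      ≤ ∑ i, ∑ j, (S i j - N i j) ^ 2 := by
  refine Finset.sum_le_sum fun i _ => Finset.sum_le_sum fun j _ => ?_
  rw [of_apply]
  by_cases hij : (i : ℕ) = (j : ℕ)
  · rw [if_pos hij]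
    exact sq_sub_min_one_le (hSnn i j hij) (hN i j)
  · rw [if_neg hij, hSdiag i j hij]
    simpa using sq_nonneg (N i j)

theorem svd_clipping_is_projection_general {I J : ℕ}
    (W : Matrix (Fin I) (Fin J) ℝ)
    (U : Matrix (Fin I) (Fin I) ℝ) (V : Matrix (Fin J) (Fin J) ℝ)
    (S : Matrix (Fin I) (Fin J) ℝ)
    (hU2 : Uᵀ * U = 1)
    (hV2 : Vᵀ * V = 1)
    (hSdiag : ∀ (i : Fin I) (j : Fin J), (i : ℕ) ≠ (j : ℕ) → S i j = 0)
    (hSnn : ∀ (i : Fin I) (j : Fin J), (i : ℕ) = (j : ℕ) → 0 ≤ S i j)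
    (hW : W = U * S * Vᵀ) :
    ∀ M : Matrix (Fin I) (Fin J) ℝ, (1 - M * Mᵀ).PosSemidef →
      Real.sqrt (∑ i : Fin I, ∑ j : Fin J,
          (W i j - (U * (Matrix.of fun (i : Fin I) (j : Fin J) =>
              if (i : ℕ) = (j : ℕ) then min (S i j) 1 else 0) * Vᵀ) i j) ^ 2)
        ≤ Real.sqrt (∑ i : Fin I, ∑ j : Fin J, (W i j - M i j) ^ 2) := by
  intro M hM
  obtain ⟨N, rfl⟩ : ∃ N : Matrix (Fin I) (Fin J) ℝ, M = U * N * Vᵀ := by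
    refine ⟨Uᵀ * M * V, ?_⟩
    rw [← Matrix.mul_assoc, ← Matrix.mul_assoc, mul_eq_one_comm.1 hU2, Matrix.one_mul,
      Matrix.mul_assoc, mul_eq_one_comm.1 hV2, Matrix.mul_one]
  subst hW
  apply Real.sqrt_le_sqrt
  rw [sum_sq_sub_mul_mul_transpose_of_isometry hU2 hV2,
    sum_sq_sub_mul_mul_transpose_of_isometry hU2 hV2]
  exact sum_sq_sub_clip_le hSdiag hSnn
    (sq_le_one_of_posSemidef_one_sub_mul_transpose
      (posSemidef_one_sub_mul_transpose_of_isometry hU2 hV2 hM))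

/-- Let `W = U S Vᵀ` be a singular value decomposition of a real
`I × J` matrix, and let `W̃ = U S̃ Vᵀ` where `S̃` clips each diagonal entry of `S` at
`1`. Then `W̃` solves `min_M ‖W − M‖_F` subject to `I − M Mᵀ ⪰ 0`: for every real
`I × J` matrix `M` with `I − M Mᵀ` positive semidefinite, `‖W − W̃‖_F ≤ ‖W − M‖_F`. -/
theorem svd_clipping_is_projection {I J : ℕ}
    (W : Matrix (Fin I) (Fin J) ℝ)
    (U : Matrix (Fin I) (Fin I) ℝ) (V : Matrix (Fin J) (Fin J) ℝ)
    (S : Matrix (Fin I) (Fin J) ℝ)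
    (hU1 : U * Uᵀ = 1) (hU2 : Uᵀ * U = 1)
    (hV1 : V * Vᵀ = 1) (hV2 : Vᵀ * V = 1)
    (hSdiag : ∀ (i : Fin I) (j : Fin J), (i : ℕ) ≠ (j : ℕ) → S i j = 0)
    (hSnn : ∀ (i : Fin I) (j : Fin J), (i : ℕ) = (j : ℕ) → 0 ≤ S i j)
    (hW : W = U * S * Vᵀ) :
    ∀ M : Matrix (Fin I) (Fin J) ℝ, (1 - M * Mᵀ).PosSemidef →
      Real.sqrt (∑ i : Fin I, ∑ j : Fin J,
          (W i j - (U * (Matrix.of fun (i : Fin I) (j : Fin J) =>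
              if (i : ℕ) = (j : ℕ) then min (S i j) 1 else 0) * Vᵀ) i j) ^ 2)
        ≤ Real.sqrt (∑ i : Fin I, ∑ j : Fin J, (W i j - M i j) ^ 2) :=
  svd_clipping_is_projection_general W U V S hU2 hV2 hSdiag hSnn hW
end

section
/- Let Ω be a symmetric real I × I matrix and let R ⊆ ℝ^I be an open cone (i.e., an open set closed under multiplication by positive scalars). If there exists u ∈ R with uᵀ Ω u < 0, then the integral over v ∈ R of exp(−½ vᵀ Ω v) dv is infinite. -/
open Matrix MeasureTheory Pointwise

/-!
The set `S` of points of `R` where the quadratic form is negative is a nonempty open cone, and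
the integrand is at least `1` on it. A Haar measure scales by `2 ^ dim` under `v ↦ 2 • v`, which
maps the cone `S` into itself, so `2 * μ S ≤ μ S`; as `μ S > 0`, this forces `μ S = ∞`.
-/

theorem measure_eq_top_of_isOpen_of_smul_mem {E : Type*} [NormedAddCommGroup E]
    [NormedSpace ℝ E] [MeasurableSpace E] [BorelSpace E] [FiniteDimensional ℝ E] [Nontrivial E]
    (μ : Measure E) [μ.IsAddHaarMeasure] {S : Set E} (hSopen : IsOpen S) (hSne : S.Nonempty)
    (hScone : ∀ v ∈ S, ∀ l : ℝ, 0 < l → l • v ∈ S) :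
    μ S = ⊤ := by
  have hdilate : (2 : ℝ) • S ⊆ S := by
    rintro _ ⟨v, hv, rfl⟩
    exact hScone v hv 2 two_pos
  have htwo_le : (2 : ENNReal) ≤ ENNReal.ofReal (2 ^ Module.finrank ℝ E) := by
    rw [← ENNReal.ofReal_ofNat]
    exact ENNReal.ofReal_le_ofReal (le_self_pow₀ one_le_two Module.finrank_pos.ne')
  have hdouble : 2 * μ S ≤ μ S :=
    calc 2 * μ S ≤ ENNReal.ofReal (2 ^ Module.finrank ℝ E) * μ S := by gcongr
      _ = μ ((2 : ℝ) • S) := (Measure.addHaar_smul_of_nonneg μ zero_le_two S).symm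
      _ ≤ μ S := measure_mono hdilate
  by_contra hfin
  have hpos : μ S ≠ 0 := (hSopen.measure_pos μ hSne).ne'
  exact (ENNReal.lt_add_right hfin hpos).not_ge (two_mul (μ S) ▸ hdouble)

theorem smul_dotProduct_mulVec_smul {n : Type*} [Fintype n] (A : Matrix n n ℝ) (l : ℝ)
    (v : n → ℝ) : (l • v) ⬝ᵥ (A *ᵥ (l • v)) = l ^ 2 * (v ⬝ᵥ (A *ᵥ v)) := by
  simp only [mulVec_smul, smul_dotProduct, dotProduct_smul, smul_eq_mul]
  ring

theorem gaussian_integral_diverges_on_cone_with_negative_direction_general {I : ℕ}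
    (Ω : Matrix (Fin I) (Fin I) ℝ)
    (R : Set (Fin I → ℝ)) (hRopen : IsOpen R)
    (hRcone : ∀ v ∈ R, ∀ l : ℝ, 0 < l → l • v ∈ R)
    (u : Fin I → ℝ) (huR : u ∈ R) (huneg : u ⬝ᵥ (Ω *ᵥ u) < 0) :
    ∫⁻ v in R, ENNReal.ofReal (Real.exp (-(1 / 2) * (v ⬝ᵥ (Ω *ᵥ v)))) = ⊤ := by
  set S := R ∩ {v | v ⬝ᵥ (Ω *ᵥ v) < 0}
  have hq : Continuous fun v : Fin I → ℝ => v ⬝ᵥ (Ω *ᵥ v) := by fun_prop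
  have hu0 : u ≠ 0 := by
    rintro rfl
    simp at huneg
  have := nontrivial_of_ne u 0 hu0
  have hScone : ∀ v ∈ S, ∀ l : ℝ, 0 < l → l • v ∈ S := by
    rintro v ⟨hvR, hvneg⟩ l hl
    refine ⟨hRcone v hvR l hl, ?_⟩
    rw [Set.mem_ofPred_eq, smul_dotProduct_mulVec_smul]
    exact mul_neg_of_pos_of_neg (by positivity) hvneg
  have hS : volume S = ⊤ := measure_eq_top_of_isOpen_of_smul_mem volume
    (hRopen.inter (isOpen_lt hq continuous_const)) ⟨u, huR, huneg⟩ hScone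
  refine top_le_iff.mp (hS ▸ ?_)
  calc volume S = ∫⁻ _ in S, 1 := (setLIntegral_one S).symm
    _ ≤ ∫⁻ v in S, ENNReal.ofReal (Real.exp (-(1 / 2) * (v ⬝ᵥ (Ω *ᵥ v)))) :=
      setLIntegral_mono (by fun_prop) fun v ⟨_, hvneg⟩ =>
        ENNReal.one_le_ofReal.mpr (Real.one_le_exp (by linarith [hvneg.out]))
    _ ≤ _ := lintegral_mono_set Set.inter_subset_left

/-- Let `Ω` be a symmetric real `I × I` matrix and `R ⊆ ℝ^I` an open
cone (open and closed under multiplication by positive scalars). If some `u ∈ R`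
satisfies `uᵀ Ω u < 0`, then `∫_R exp(−½ vᵀ Ω v) dv = ∞`. -/
theorem gaussian_integral_diverges_on_cone_with_negative_direction {I : ℕ}
    (Ω : Matrix (Fin I) (Fin I) ℝ) (hΩ : Ω.IsSymm)
    (R : Set (Fin I → ℝ)) (hRopen : IsOpen R)
    (hRcone : ∀ v ∈ R, ∀ l : ℝ, 0 < l → l • v ∈ R)
    (u : Fin I → ℝ) (huR : u ∈ R) (huneg : u ⬝ᵥ (Ω *ᵥ u) < 0) :
    ∫⁻ v in R, ENNReal.ofReal (Real.exp (-(1 / 2) * (v ⬝ᵥ (Ω *ᵥ v)))) = ⊤ :=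
  gaussian_integral_diverges_on_cone_with_negative_direction_general Ω R hRopen hRcone u huR huneg
end

section
/- Let W be a real I × J matrix with columns W_1, …, W_J, let b ∈ ℝ^J, and let c ∈ (0,1). For v ∈ ℝ^I define α_j(v) = 1 if W_jᵀ v + b_j > 0 and α_j(v) = c otherwise. If I − W Wᵀ is positive definite, then the unnormalized leaky RBM marginal is normalizable: the integral over v ∈ ℝ^I of exp(−½ vᵀ (I − Σ_{j=1}^J α_j(v) W_j W_jᵀ) v + Σ_{j=1}^J α_j(v) b_j W_jᵀ v) dv is finite. -/
/-!
Whatever the sign pattern, the gates `α_j(v)` lie in `[0, 1]`. For such gates, AM-GM gives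
`α_j ((W_jᵀv)²/2 + b_j W_jᵀv) ≤ (1/2 + ε/4) (W_jᵀv)² + b_j²/ε`, and positive definiteness gives
`vᵀv - ∑_j (W_jᵀv)² = vᵀ(1 - W Wᵀ)v ≥ ε vᵀv`. Together they bound the exponent by `K - (ε/4) vᵀv`
uniformly in the sign pattern, so the integrand is dominated by an integrable Gaussian.
-/

open Matrix MeasureTheory

section

variable {ι κ : Type*} [Fintype ι] [Fintype κ]

open scoped MatrixOrder in
lemma Matrix.PosDef.exists_pos_mul_dotProduct_self_le {A : Matrix ι ι ℝ} (hA : A.PosDef) :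
    ∃ ε > 0, ∀ v, ε * (v ⬝ᵥ v) ≤ v ⬝ᵥ (A *ᵥ v) := by
  classical
  cases isEmpty_or_nonempty ι
  · exact ⟨1, one_pos, fun v => by simp [dotProduct]⟩
  obtain ⟨ε, hε, hεA⟩ := (CFC.exists_pos_algebraMap_le_iff hA.isHermitian.isSelfAdjoint).2
    fun _ hx => hA.isStrictlyPositive.spectrum_pos hx
  refine ⟨ε, hε, fun v => ?_⟩
  have := (le_iff.1 hεA).dotProduct_mulVec_nonneg v
  rw [Algebra.algebraMap_eq_smul_one, sub_mulVec, smul_mulVec, one_mulVec, star_trivial,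
    dotProduct_sub, dotProduct_smul, smul_eq_mul] at this
  linarith

lemma dotProduct_one_sub_sum_smul_vecMulVec_mulVec [DecidableEq ι] (α : κ → ℝ)
    (w : κ → ι → ℝ) (v : ι → ℝ) :
    v ⬝ᵥ ((1 - ∑ j, α j • vecMulVec (w j) (w j)) *ᵥ v) = v ⬝ᵥ v - ∑ j, α j * (w j ⬝ᵥ v) ^ 2 := by
  simp only [sub_mulVec, one_mulVec, sum_mulVec, dotProduct_sub, dotProduct_sum, smul_mulVec,
    vecMulVec_mulVec, dotProduct_smul, smul_eq_mul, op_smul_eq_smul, dotProduct_comm v (w _), sq]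

omit [Fintype ι] in
lemma mul_transpose_self_eq_sum_vecMulVec (W : Matrix ι κ ℝ) :
    W * Wᵀ = ∑ j, vecMulVec (W.col j) (W.col j) := by
  ext i k
  simp [mul_apply, vecMulVec_apply, Matrix.sum_apply]

lemma dotProduct_one_sub_mul_transpose_mulVec [DecidableEq ι] (W : Matrix ι κ ℝ) (v : ι → ℝ) :
    v ⬝ᵥ ((1 - W * Wᵀ) *ᵥ v) = v ⬝ᵥ v - ∑ j, (W.col j ⬝ᵥ v) ^ 2 := by
  rw [mul_transpose_self_eq_sum_vecMulVec]
  simpa using dotProduct_one_sub_sum_smul_vecMulVec_mulVec (fun _ => 1) W.col v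

lemma mul_half_sq_add_mul_le {a δ : ℝ} (ha : a ∈ Set.Icc (0 : ℝ) 1) (hδ : 0 < δ) (t b : ℝ) :
    a * (t ^ 2 / 2 + b * t) ≤ (1 / 2 + δ) * t ^ 2 + b ^ 2 / (4 * δ) := by
  obtain ⟨ha0, ha1⟩ := ha
  have amgm : a * b * t ≤ δ * t ^ 2 + (a * b) ^ 2 / (4 * δ) := by
    have : δ * t ^ 2 + (a * b) ^ 2 / (4 * δ) - a * b * t = (2 * δ * t - a * b) ^ 2 / (4 * δ) := by
      field_simp
      ring
    linarith [div_nonneg (sq_nonneg (2 * δ * t - a * b)) (by positivity : (0 : ℝ) ≤ 4 * δ)]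
  have hab : (a * b) ^ 2 / (4 * δ) ≤ b ^ 2 / (4 * δ) := by
    gcongr ?_ / _
    rw [mul_pow]
    exact mul_le_of_le_one_left (sq_nonneg b) (pow_le_one₀ ha0 ha1)
  nlinarith [mul_le_of_le_one_left (sq_nonneg t) ha1]

lemma integrable_exp_neg_mul_dotProduct_self {η : ℝ} (hη : 0 < η) :
    Integrable fun v : ι → ℝ => Real.exp (-η * (v ⬝ᵥ v)) :=
  (Integrable.fintype_prod fun _ => integrable_exp_neg_mul_sq hη).congr <|
    ae_of_all _ fun v => by simp [dotProduct, Finset.mul_sum, ← Real.exp_sum, sq]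

lemma lintegral_ofReal_exp_lt_top_of_le {f : (ι → ℝ) → ℝ} {K η : ℝ} (hη : 0 < η)
    (hf : ∀ v, f v ≤ K - η * (v ⬝ᵥ v)) : ∫⁻ v, ENNReal.ofReal (Real.exp (f v)) < ⊤ :=
  calc ∫⁻ v, ENNReal.ofReal (Real.exp (f v))
      ≤ ∫⁻ v, ENNReal.ofReal (Real.exp K * Real.exp (-η * (v ⬝ᵥ v))) :=
        lintegral_mono fun v => ENNReal.ofReal_le_ofReal <| by
          rw [← Real.exp_add]
          exact Real.exp_le_exp.2 (by linarith [hf v])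
    _ < ⊤ := ((integrable_exp_neg_mul_dotProduct_self hη).const_mul _).lintegral_lt_top

/-- The exponent of the leaky RBM marginal with the gates `α_j(v)` frozen to the values `α j`. -/
noncomputable def leakyRBMExponent [DecidableEq ι] (W : Matrix ι κ ℝ) (b α : κ → ℝ)
    (v : ι → ℝ) : ℝ :=
  -(1 / 2) * (v ⬝ᵥ ((1 - ∑ j, α j • vecMulVec (W.col j) (W.col j)) *ᵥ v)) +
    ∑ j, α j * b j * (W.col j ⬝ᵥ v)

lemma exists_leakyRBMExponent_le [DecidableEq ι] (W : Matrix ι κ ℝ) (b : κ → ℝ)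
    (hW : (1 - W * Wᵀ).PosDef) :
    ∃ K, ∃ η > 0, ∀ α : κ → ℝ, (∀ j, α j ∈ Set.Icc (0 : ℝ) 1) →
      ∀ v, leakyRBMExponent W b α v ≤ K - η * (v ⬝ᵥ v) := by
  obtain ⟨ε, hε, hεW⟩ := hW.exists_pos_mul_dotProduct_self_le
  refine ⟨∑ j, b j ^ 2 / ε, ε / 4, by positivity, fun α hα v => ?_⟩
  set S := ∑ j, (W.col j ⬝ᵥ v) ^ 2
  have hcoercive : ε * (v ⬝ᵥ v) ≤ v ⬝ᵥ v - S := by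
    rw [← dotProduct_one_sub_mul_transpose_mulVec]
    exact hεW v
  have hvv : 0 ≤ v ⬝ᵥ v := Finset.sum_nonneg fun i _ => mul_self_nonneg (v i)
  have hS : S ≤ v ⬝ᵥ v := by linarith [mul_nonneg hε.le hvv]
  have hterm (j : κ) : α j * ((W.col j ⬝ᵥ v) ^ 2 / 2 + b j * (W.col j ⬝ᵥ v)) ≤
      (1 / 2 + ε / 4) * (W.col j ⬝ᵥ v) ^ 2 + b j ^ 2 / ε := by
    convert mul_half_sq_add_mul_le (hα j) (by positivity : 0 < ε / 4) _ (b j) using 3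
    ring
  calc leakyRBMExponent W b α v
      = -(1 / 2) * (v ⬝ᵥ v) + ∑ j, α j * ((W.col j ⬝ᵥ v) ^ 2 / 2 + b j * (W.col j ⬝ᵥ v)) := by
        rw [leakyRBMExponent, dotProduct_one_sub_sum_smul_vecMulVec_mulVec α W.col v,
          mul_sub, Finset.mul_sum]
        simp only [sub_eq_add_neg, add_assoc, ← Finset.sum_neg_distrib, ← Finset.sum_add_distrib]
        congr 1
        exact Finset.sum_congr rfl fun j _ => by ring
    _ ≤ -(1 / 2) * (v ⬝ᵥ v) + ∑ j, ((1 / 2 + ε / 4) * (W.col j ⬝ᵥ v) ^ 2 + b j ^ 2 / ε) := by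
        gcongr with j
        exact hterm j
    _ = -(1 / 2) * (v ⬝ᵥ v - S) + ε / 4 * S + ∑ j, b j ^ 2 / ε := by
        rw [Finset.sum_add_distrib, ← Finset.mul_sum]
        ring
    _ ≤ ∑ j, b j ^ 2 / ε - ε / 4 * (v ⬝ᵥ v) := by
        linarith [mul_le_mul_of_nonneg_left hS (by positivity : (0 : ℝ) ≤ ε / 4)]

end

/-- Normalizability of the leaky RBM marginal. Let `W` be a real
`I × J` matrix with columns `W_j`, `b ∈ ℝ^J`, and leakiness `c ∈ (0,1)`. For
`v ∈ ℝ^I` set `α_j(v) = 1` if `W_jᵀ v + b_j > 0` and `α_j(v) = c` otherwise.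
If `I − W Wᵀ` is positive definite, then
`∫_{ℝ^I} exp(−½ vᵀ (I − ∑_j α_j(v) W_j W_jᵀ) v + ∑_j α_j(v) b_j W_jᵀ v) dv < ∞`. -/
theorem leaky_rbm_marginal_normalizable {I J : ℕ}
    (W : Matrix (Fin I) (Fin J) ℝ) (b : Fin J → ℝ) (c : ℝ)
    (hc : c ∈ Set.Ioo (0 : ℝ) 1) (hW : (1 - W * Wᵀ).PosDef) :
    (∫⁻ v : Fin I → ℝ, ENNReal.ofReal (Real.exp
        (-(1 / 2) * (v ⬝ᵥ ((1 - ∑ j : Fin J,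
              (if 0 < (fun i => W i j) ⬝ᵥ v + b j then (1 : ℝ) else c) •
                Matrix.vecMulVec (fun i => W i j) (fun i => W i j)) *ᵥ v))
          + ∑ j : Fin J,
              (if 0 < (fun i => W i j) ⬝ᵥ v + b j then (1 : ℝ) else c) * b j *
                ((fun i => W i j) ⬝ᵥ v)))) < ⊤ := by
  obtain ⟨K, η, hη, hle⟩ := exists_leakyRBMExponent_le W b hW
  refine lintegral_ofReal_exp_lt_top_of_le hη fun v =>
    hle (fun j => if 0 < (fun i => W i j) ⬝ᵥ v + b j then 1 else c) (fun j => ?_) v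
  split_ifs
  exacts [Set.right_mem_Icc.2 zero_le_one, Set.Ioo_subset_Icc_self hc]
end

section
/- Let W_1, …, W_J ∈ ℝ^I be nonzero pairwise orthogonal vectors with Σ_j W_j W_jᵀ ⪯ I strictly (i.e., I − Σ_j W_j W_jᵀ positive definite), and let c ∈ (0,1). For v ∈ ℝ^I define α_j(v) = 1 if W_jᵀ v > 0 and α_j(v) = c otherwise. Then the partition function of the zero-bias orthogonal leaky RBM has the closed form: the integral over v ∈ ℝ^I of exp(−½ vᵀ (I − Σ_{j=1}^J α_j(v) W_j W_jᵀ) v) dv equals 2^{−J} Σ_{α ∈ {1,c}^J} (2π)^{I/2} det(I − Σ_{j=1}^J α_j W_j W_jᵀ)^{−1/2}. -/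
/-! For pairwise orthogonal `W j` and a set `t` of hidden units, the product `R_t` of the
reflections in the hyperplanes `(W j)ᗮ`, `j ∈ t`, is orthogonal and flips the sign of `W jᵀ v`
exactly for `j ∈ t`. So the integrand at `R_t v` is the Gaussian kernel of
`I - ∑ α_j W_j W_jᵀ` whose pattern `α` is that of `v` flipped on `t`, and summing over all `t`
gives the sum over all `2^J` patterns, for every `v`. Integrating, each of the `2^J` terms on
the left contributes the partition function (as `|det R_t| = 1`), while the right is a sum of
Gaussian integrals. -/

open Matrix BigOperators MeasureTheory Real

section ChangeOfVariables

variable {ι : Type*} [Fintype ι] [DecidableEq ι] {M : Matrix ι ι ℝ}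

lemma measurableEmbedding_mulVec (hM : M.det ≠ 0) : MeasurableEmbedding (M *ᵥ ·) :=
  letI : Invertible M := M.invertibleOfIsUnitDet hM.isUnit
  (M.toLinearEquiv' this).toContinuousLinearEquiv.toHomeomorph.measurableEmbedding

lemma map_mulVec_volume (hM : M.det ≠ 0) :
    Measure.map (M *ᵥ ·) volume = ENNReal.ofReal |M.det|⁻¹ • volume := by
  rw [← abs_inv, ← Real.map_matrix_volume_pi_eq_smul_volume_pi hM]
  rfl

lemma integral_comp_mulVec (hM : M.det ≠ 0) (f : (ι → ℝ) → ℝ) :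
    ∫ v, f (M *ᵥ v) = |M.det|⁻¹ * ∫ v, f v := by
  rw [← (measurableEmbedding_mulVec hM).integral_map, map_mulVec_volume hM,
    integral_smul_measure, ENNReal.toReal_ofReal (by positivity), smul_eq_mul]

lemma integrable_comp_mulVec_iff (hM : M.det ≠ 0) {f : (ι → ℝ) → ℝ} :
    Integrable (fun v => f (M *ᵥ v)) ↔ Integrable f := by
  change Integrable (f ∘ (M *ᵥ ·)) ↔ _
  rw [← (measurableEmbedding_mulVec hM).integrable_map_iff, map_mulVec_volume hM]
  exact integrable_smul_measure (by simpa using hM) ENNReal.ofReal_ne_top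

end ChangeOfVariables

section Gaussian

variable {ι : Type*} [Fintype ι]

noncomputable def gaussianKernel (A : Matrix ι ι ℝ) (v : ι → ℝ) : ℝ :=
  exp (-(1 / 2) * (v ⬝ᵥ (A *ᵥ v)))

lemma gaussianKernel_pos (A : Matrix ι ι ℝ) (v : ι → ℝ) : 0 < gaussianKernel A v :=
  exp_pos _

variable [DecidableEq ι]

lemma gaussianKernel_one (u : ι → ℝ) :
    gaussianKernel 1 u = ∏ i, exp (-(1 / 2) * u i ^ 2) := by
  rw [gaussianKernel, one_mulVec, ← exp_sum, dotProduct, Finset.mul_sum]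
  simp only [sq]

lemma integrable_gaussianKernel_one : Integrable (gaussianKernel (1 : Matrix ι ι ℝ)) := by
  simp only [funext gaussianKernel_one]
  exact Integrable.fintype_prod fun _ => integrable_exp_neg_mul_sq (by norm_num)

lemma integral_gaussianKernel_one :
    ∫ u, gaussianKernel (1 : Matrix ι ι ℝ) u = (2 * π) ^ ((Fintype.card ι : ℝ) / 2) := by
  simp only [funext gaussianKernel_one]
  rw [volume_pi, integral_fintype_prod_eq_pow (fun t : ℝ => exp (-(1 / 2) * t ^ 2)),
    integral_gaussian, sqrt_eq_rpow, ← rpow_natCast, ← rpow_mul (by positivity)]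
  ring_nf

open scoped MatrixOrder in
lemma Matrix.PosDef.exists_eq_transpose_mul_self {A : Matrix ι ι ℝ} (hA : A.PosDef) :
    ∃ B : Matrix ι ι ℝ, A = Bᵀ * B := by
  simpa [star_eq_conjTranspose] using
    CStarAlgebra.nonneg_iff_eq_star_mul_self.mp hA.posSemidef.nonneg

lemma gaussianKernel_transpose_mul_self (B : Matrix ι ι ℝ) (v : ι → ℝ) :
    gaussianKernel (Bᵀ * B) v = gaussianKernel 1 (B *ᵥ v) := by
  rw [gaussianKernel, gaussianKernel, one_mulVec, ← mulVec_mulVec, dotProduct_mulVec,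
    vecMul_transpose]

variable {A : Matrix ι ι ℝ}

lemma integrable_gaussianKernel (hA : A.PosDef) : Integrable (gaussianKernel A) := by
  have hdet := hA.det_pos
  obtain ⟨B, rfl⟩ := hA.exists_eq_transpose_mul_self
  rw [det_mul, det_transpose] at hdet
  rw [funext (gaussianKernel_transpose_mul_self B),
    integrable_comp_mulVec_iff (fun h => by simp [h] at hdet)]
  exact integrable_gaussianKernel_one

lemma integral_gaussianKernel (hA : A.PosDef) :
    ∫ v, gaussianKernel A v = (2 * π) ^ ((Fintype.card ι : ℝ) / 2) * A.det ^ (-(1 : ℝ) / 2) := by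
  have hdet := hA.det_pos
  obtain ⟨B, rfl⟩ := hA.exists_eq_transpose_mul_self
  rw [det_mul, det_transpose] at hdet ⊢
  have hB : |B.det|⁻¹ = (B.det * B.det) ^ (-(1 : ℝ) / 2) := by
    rw [← abs_mul_abs_self, ← sq, ← rpow_natCast, ← rpow_mul (abs_nonneg _)]
    norm_num [rpow_neg_one]
  simp only [gaussianKernel_transpose_mul_self]
  rw [integral_comp_mulVec (fun h => by simp [h] at hdet), integral_gaussianKernel_one, hB,
    mul_comm]

end Gaussian

section OneSubSumOuter

variable {ι κ : Type*} [DecidableEq ι] [Fintype κ] (W : κ → ι → ℝ)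

noncomputable def oneSubSumOuter (α : κ → ℝ) : Matrix ι ι ℝ :=
  1 - ∑ j, α j • vecMulVec (W j) (W j)

lemma oneSubSumOuter_transpose (α : κ → ℝ) : (oneSubSumOuter W α)ᵀ = oneSubSumOuter W α := by
  simp [oneSubSumOuter, transpose_sum, transpose_vecMulVec]

variable [Fintype ι]

lemma oneSubSumOuter_mulVec (α : κ → ℝ) (v : ι → ℝ) :
    oneSubSumOuter W α *ᵥ v = v - ∑ j, (α j * (W j ⬝ᵥ v)) • W j := by
  simp [oneSubSumOuter, sub_mulVec, sum_mulVec, smul_mulVec, vecMulVec_mulVec, smul_smul]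

lemma dotProduct_oneSubSumOuter_mulVec (α : κ → ℝ) (v : ι → ℝ) :
    v ⬝ᵥ (oneSubSumOuter W α *ᵥ v) = v ⬝ᵥ v - ∑ j, α j * (W j ⬝ᵥ v) ^ 2 := by
  rw [oneSubSumOuter_mulVec, dotProduct_sub, dotProduct_sum]
  congr 1
  refine Finset.sum_congr rfl fun j _ => ?_
  rw [dotProduct_smul, smul_eq_mul, dotProduct_comm]
  ring

lemma posDef_oneSubSumOuter (hPD : (1 - ∑ j, vecMulVec (W j) (W j)).PosDef) {α : κ → ℝ}
    (hα : ∀ j, α j ≤ 1) : (oneSubSumOuter W α).PosDef := by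
  refine .of_dotProduct_mulVec_pos ?_ fun v hv => ?_
  · simpa [IsHermitian] using oneSubSumOuter_transpose W α
  have h1 := hPD.dotProduct_mulVec_pos hv
  rw [show (1 : Matrix ι ι ℝ) - ∑ j, vecMulVec (W j) (W j) = oneSubSumOuter W 1 by
    simp [oneSubSumOuter], star_trivial, dotProduct_oneSubSumOuter_mulVec] at h1
  simp only [Pi.one_apply, one_mul] at h1
  rw [star_trivial, dotProduct_oneSubSumOuter_mulVec]
  have : ∑ j, α j * (W j ⬝ᵥ v) ^ 2 ≤ ∑ j, (W j ⬝ᵥ v) ^ 2 :=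
    Finset.sum_le_sum fun j _ => mul_le_of_le_one_left (sq_nonneg _) (hα j)
  linarith

end OneSubSumOuter

section Reflection

variable {ι κ : Type*} [Fintype ι] [DecidableEq ι] [Fintype κ] {W : κ → ι → ℝ}

variable (W) in
/-- For orthogonal `W`, the product of the reflections in the hyperplanes `(W j)ᗮ` with `t j`.
If `W j = 0`, the junk value `2 / 0 = 0` makes its factor the identity. -/
noncomputable def reflectionMatrix (t : κ → Bool) : Matrix ι ι ℝ :=
  oneSubSumOuter W fun j => if t j then 2 / (W j ⬝ᵥ W j) else 0

lemma dotProduct_reflectionMatrix_mulVec (horth : Pairwise fun i j => W i ⬝ᵥ W j = 0)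
    (t : κ → Bool) (k : κ) (v : ι → ℝ) :
    W k ⬝ᵥ (reflectionMatrix W t *ᵥ v) = if t k then -(W k ⬝ᵥ v) else W k ⬝ᵥ v := by
  rw [reflectionMatrix, oneSubSumOuter_mulVec, dotProduct_sub, dotProduct_sum,
    Finset.sum_eq_single k (fun j _ hj => by rw [dotProduct_smul, horth hj.symm, smul_zero])
      (by simp)]
  by_cases hWk : W k = 0
  · simp [hWk]
  have : W k ⬝ᵥ W k ≠ 0 := by rwa [Ne, dotProduct_self_eq_zero]
  split_ifs <;> simp only [dotProduct_smul, smul_eq_mul] <;> field_simp <;> ring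

lemma reflectionMatrix_mul_self (horth : Pairwise fun i j => W i ⬝ᵥ W j = 0) (t : κ → Bool) :
    reflectionMatrix W t * reflectionMatrix W t = 1 := by
  refine ext_iff_mulVec.mpr fun v => ?_
  have hflip : ∀ j, (if t j then 2 / (W j ⬝ᵥ W j) else 0) * (W j ⬝ᵥ (reflectionMatrix W t *ᵥ v))
      = -((if t j then 2 / (W j ⬝ᵥ W j) else 0) * (W j ⬝ᵥ v)) := fun j => by
    rw [dotProduct_reflectionMatrix_mulVec horth]
    split_ifs <;> ring
  rw [← mulVec_mulVec, one_mulVec]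
  set u := reflectionMatrix W t *ᵥ v with hu
  rw [reflectionMatrix, oneSubSumOuter_mulVec]
  simp only [hflip, neg_smul, Finset.sum_neg_distrib, sub_neg_eq_add]
  rw [hu, reflectionMatrix, oneSubSumOuter_mulVec, sub_add_cancel]

lemma abs_det_reflectionMatrix (horth : Pairwise fun i j => W i ⬝ᵥ W j = 0) (t : κ → Bool) :
    |(reflectionMatrix W t).det| = 1 := by
  have h := congrArg det (reflectionMatrix_mul_self horth t)
  rw [det_mul, det_one, ← abs_mul_abs_self, mul_self_eq_one_iff] at h
  exact h.resolve_right (by linarith [abs_nonneg (reflectionMatrix W t).det])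

lemma dotProduct_self_reflectionMatrix_mulVec (horth : Pairwise fun i j => W i ⬝ᵥ W j = 0)
    (t : κ → Bool) (v : ι → ℝ) :
    (reflectionMatrix W t *ᵥ v) ⬝ᵥ (reflectionMatrix W t *ᵥ v) = v ⬝ᵥ v := by
  have hsymm : ∀ x, x ᵥ* reflectionMatrix W t = reflectionMatrix W t *ᵥ x := fun x => by
    rw [← vecMul_transpose, reflectionMatrix, oneSubSumOuter_transpose]
  rw [dotProduct_mulVec, hsymm, mulVec_mulVec, reflectionMatrix_mul_self horth, one_mulVec]

end Reflection

section LeakyRBM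

variable {ι κ : Type*} [Fintype ι] [DecidableEq ι] [Fintype κ] (W : κ → ι → ℝ) (c : ℝ)

noncomputable def leaky (x : ℝ) : ℝ := if 0 < x then 1 else c

noncomputable def leakyPrecision (s : κ → Bool) : Matrix ι ι ℝ :=
  oneSubSumOuter W fun j => if s j then 1 else c

noncomputable def leakyRBMDensity (v : ι → ℝ) : ℝ :=
  gaussianKernel (oneSubSumOuter W fun j => leaky c (W j ⬝ᵥ v)) v

lemma leakyRBMDensity_eq_gaussianKernel (v : ι → ℝ) :
    leakyRBMDensity W c v
      = gaussianKernel (leakyPrecision W c fun j => decide (0 < W j ⬝ᵥ v)) v := by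
  simp [leakyRBMDensity, leakyPrecision, leaky]

lemma leaky_mul_sq_flip (b : Bool) (x : ℝ) :
    leaky c (if b then -x else x) * (if b then -x else x) ^ 2
      = (if xor b (decide (0 < x)) then 1 else c) * x ^ 2 := by
  cases b
  · simp [leaky]
  rcases lt_trichotomy x 0 with hx | rfl | hx
  · simp [leaky, hx, hx.not_gt]
  · simp
  · simp [leaky, hx, hx.not_gt]

lemma leakyRBMDensity_reflectionMatrix_mulVec (horth : Pairwise fun i j => W i ⬝ᵥ W j = 0)
    (t : κ → Bool) (v : ι → ℝ) :
    leakyRBMDensity W c (reflectionMatrix W t *ᵥ v)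
      = gaussianKernel (leakyPrecision W c fun j => xor (t j) (decide (0 < W j ⬝ᵥ v))) v := by
  simp only [leakyRBMDensity, leakyPrecision, gaussianKernel, dotProduct_oneSubSumOuter_mulVec,
    dotProduct_self_reflectionMatrix_mulVec horth, dotProduct_reflectionMatrix_mulVec horth,
    leaky_mul_sq_flip]

lemma sum_leakyRBMDensity_reflectionMatrix_mulVec [DecidableEq κ]
    (horth : Pairwise fun i j => W i ⬝ᵥ W j = 0) (v : ι → ℝ) :
    ∑ t, leakyRBMDensity W c (reflectionMatrix W t *ᵥ v)
      = ∑ s : κ → Bool, gaussianKernel (leakyPrecision W c s) v := by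
  let flip : Equiv.Perm (κ → Bool) := Function.Involutive.toPerm
    (fun t j => xor (t j) (decide (0 < W j ⬝ᵥ v))) fun t => by simp
  simp only [leakyRBMDensity_reflectionMatrix_mulVec W c horth]
  exact Equiv.sum_comp flip fun s => gaussianKernel (leakyPrecision W c s) v

lemma posDef_leakyPrecision (hPD : (1 - ∑ j, vecMulVec (W j) (W j)).PosDef) (hc : c ≤ 1)
    (s : κ → Bool) : (leakyPrecision W c s).PosDef :=
  posDef_oneSubSumOuter W hPD fun j => by split_ifs <;> linarith

lemma measurable_leakyRBMDensity : Measurable (leakyRBMDensity W c) := by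
  have hleaky : Measurable (leaky c) :=
    Measurable.ite measurableSet_Ioi measurable_const measurable_const
  unfold leakyRBMDensity gaussianKernel
  simp only [dotProduct_oneSubSumOuter_mulVec]
  fun_prop

lemma integrable_leakyRBMDensity [DecidableEq κ]
    (hPD : (1 - ∑ j, vecMulVec (W j) (W j)).PosDef) (hc : c ≤ 1) : Integrable (leakyRBMDensity W c) := by
  refine .mono' (integrable_finsetSum Finset.univ fun s _ =>
    integrable_gaussianKernel (posDef_leakyPrecision W c hPD hc s))
    (measurable_leakyRBMDensity W c).aestronglyMeasurable (.of_forall fun v => ?_)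
  rw [Real.norm_eq_abs, leakyRBMDensity_eq_gaussianKernel, abs_of_pos (gaussianKernel_pos _ _)]
  exact Finset.single_le_sum (fun s _ => (gaussianKernel_pos (leakyPrecision W c s) v).le)
    (Finset.mem_univ fun j => decide (0 < W j ⬝ᵥ v))

lemma two_pow_card_mul_integral_leakyRBMDensity [DecidableEq κ]
    (horth : Pairwise fun i j => W i ⬝ᵥ W j = 0) (hPD : (1 - ∑ j, vecMulVec (W j) (W j)).PosDef)
    (hc : c ≤ 1) :
    2 ^ Fintype.card κ * ∫ v, leakyRBMDensity W c v
      = ∑ s : κ → Bool, ∫ v, gaussianKernel (leakyPrecision W c s) v := by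
  have hdet (t : κ → Bool) : (reflectionMatrix W t).det ≠ 0 := fun h => by
    simpa [h] using abs_det_reflectionMatrix horth t
  calc 2 ^ Fintype.card κ * ∫ v, leakyRBMDensity W c v
      = ∑ t : κ → Bool, ∫ v, leakyRBMDensity W c (reflectionMatrix W t *ᵥ v) := by
        simp [integral_comp_mulVec (hdet _), abs_det_reflectionMatrix horth]
    _ = ∫ v, ∑ t : κ → Bool, leakyRBMDensity W c (reflectionMatrix W t *ᵥ v) :=
        (integral_finsetSum _ fun t _ =>
          (integrable_comp_mulVec_iff (hdet t)).mpr (integrable_leakyRBMDensity W c hPD hc)).symm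
    _ = ∫ v, ∑ s : κ → Bool, gaussianKernel (leakyPrecision W c s) v := by
        simp only [sum_leakyRBMDensity_reflectionMatrix_mulVec W c horth]
    _ = ∑ s : κ → Bool, ∫ v, gaussianKernel (leakyPrecision W c s) v :=
        integral_finsetSum _ fun s _ => integrable_gaussianKernel (posDef_leakyPrecision W c hPD hc s)

end LeakyRBM

theorem orthogonal_leaky_rbm_partition_function_general {I J : ℕ}
    (W : Fin J → (Fin I → ℝ))
    (horth : ∀ i j, i ≠ j → W i ⬝ᵥ W j = 0)
    (hPD : (1 - ∑ j : Fin J, Matrix.vecMulVec (W j) (W j)).PosDef)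
    (c : ℝ) (hc : c ∈ Set.Ioo (0 : ℝ) 1) :
    ∫ v : Fin I → ℝ, Real.exp (-(1 / 2) * (v ⬝ᵥ
        ((1 - ∑ j : Fin J, (if 0 < W j ⬝ᵥ v then (1 : ℝ) else c) •
            Matrix.vecMulVec (W j) (W j)) *ᵥ v)))
      = (2 : ℝ) ^ (-(J : ℝ)) * ∑ s : Fin J → Bool,
          (2 * Real.pi) ^ ((I : ℝ) / 2) *
            ((1 - ∑ j : Fin J, (if s j then (1 : ℝ) else c) •
                Matrix.vecMulVec (W j) (W j)).det) ^ (-(1 : ℝ) / 2) := by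
  have hfold := two_pow_card_mul_integral_leakyRBMDensity W c (fun i j => horth i j) hPD hc.2.le
  simp only [integral_gaussianKernel (posDef_leakyPrecision W c hPD hc.2.le _),
    Fintype.card_fin] at hfold
  rw [rpow_neg zero_le_two, rpow_natCast]
  exact (eq_inv_mul_iff_mul_eq₀ (by positivity)).mpr hfold

/-- Closed form of the partition function of the zero-bias orthogonal
leaky RBM. Let `W_1, …, W_J ∈ ℝ^I` be nonzero pairwise orthogonal vectors with
`I − ∑_j W_j W_jᵀ` positive definite, and `c ∈ (0,1)`. With `α_j(v) = 1` if
`W_jᵀ v > 0` and `c` otherwise,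
`∫_{ℝ^I} exp(−½ vᵀ (I − ∑_j α_j(v) W_j W_jᵀ) v) dv
   = 2^{−J} ∑_{α ∈ {1,c}^J} (2π)^{I/2} det(I − ∑_j α_j W_j W_jᵀ)^{−1/2}`. -/
theorem orthogonal_leaky_rbm_partition_function {I J : ℕ}
    (W : Fin J → (Fin I → ℝ)) (hWne : ∀ j, W j ≠ 0)
    (horth : ∀ i j, i ≠ j → W i ⬝ᵥ W j = 0)
    (hPD : (1 - ∑ j : Fin J, Matrix.vecMulVec (W j) (W j)).PosDef)
    (c : ℝ) (hc : c ∈ Set.Ioo (0 : ℝ) 1) :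
    ∫ v : Fin I → ℝ, Real.exp (-(1 / 2) * (v ⬝ᵥ
        ((1 - ∑ j : Fin J, (if 0 < W j ⬝ᵥ v then (1 : ℝ) else c) •
            Matrix.vecMulVec (W j) (W j)) *ᵥ v)))
      = (2 : ℝ) ^ (-(J : ℝ)) * ∑ s : Fin J → Bool,
          (2 * Real.pi) ^ ((I : ℝ) / 2) *
            ((1 - ∑ j : Fin J, (if s j then (1 : ℝ) else c) •
                Matrix.vecMulVec (W j) (W j)).det) ^ (-(1 : ℝ) / 2) :=
  orthogonal_leaky_rbm_partition_function_general W horth hPD c hc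
end

section
/- Let W_1, …, W_J ∈ ℝ^I and b ∈ ℝ^J. The number of distinct sign vectors (𝟙[W_1ᵀ v + b_1 > 0], …, 𝟙[W_Jᵀ v + b_J > 0]) ∈ {0,1}^J realized as v ranges over ℝ^I is at most Σ_{i=0}^{I} C(J, i), where C(J, i) denotes the binomial coefficient (and C(J,i) = 0 for i > J). -/
/-!
Sauer–Shelah bounds the number of sign patterns by `∑_{i ≤ k} C(J, i)`, where `k` is the largest
size of a set of indices on which every sign pattern is realized, so it suffices to show `k ≤ I`.
More than `I` vectors `W_j` in `ℝ^I` satisfy a nontrivial linear relation `∑ c_j W_j = 0`, hence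
`∑ c_j (W_jᵀ v + b_j)` is a constant `d`. If `d ≤ 0`, the pattern "positive exactly where `c_j > 0`"
would make this sum positive; if `d > 0`, the pattern "positive exactly where `c_j < 0`" would make
it nonpositive. Either way some pattern is missing.
-/

open Finset Module

section SignPatterns

variable {𝕜 ι : Type*} [Ring 𝕜] [LinearOrder 𝕜] [IsStrictOrderedRing 𝕜]

lemma sum_mul_nonpos_of_pos_iff_neg {t : Finset ι} {c x : ι → 𝕜}
    (h : ∀ j ∈ t, 0 < x j ↔ c j < 0) : ∑ j ∈ t, c j * x j ≤ 0 := by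
  refine sum_nonpos fun j hj => ?_
  rcases lt_or_ge (c j) 0 with hc | hc
  · exact (mul_neg_of_neg_of_pos hc ((h j hj).2 hc)).le
  · exact mul_nonpos_of_nonneg_of_nonpos hc (not_lt.1 fun hx => (not_lt.2 hc) ((h j hj).1 hx))

lemma sum_mul_pos_of_pos_iff_pos {t : Finset ι} {c x : ι → 𝕜}
    (h : ∀ j ∈ t, 0 < x j ↔ 0 < c j) (hc : ∃ j ∈ t, 0 < c j) : 0 < ∑ j ∈ t, c j * x j := by
  refine sum_pos' (fun j hj => ?_) (hc.imp fun j ⟨hj, hcj⟩ => ⟨hj, mul_pos hcj ((h j hj).2 hcj)⟩)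
  rcases lt_or_ge 0 (c j) with hcj | hcj
  · exact (mul_pos hcj ((h j hj).2 hcj)).le
  · exact mul_nonneg_of_nonpos_of_nonpos hcj (not_lt.1 fun hx => (not_lt.2 hcj) ((h j hj).1 hx))

lemma exists_sign_pattern_not_realized (t : Finset ι) (c : ι → 𝕜) (hc : ∃ j ∈ t, c j ≠ 0)
    (d : 𝕜) : ∃ u ⊆ t, ∀ x : ι → 𝕜, ∑ j ∈ t, c j * x j = d → ¬ ∀ j ∈ t, (0 < x j ↔ j ∈ u) := by
  classical
  wlog hpos : ∃ j ∈ t, 0 < c j generalizing c d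
  · refine this (-c) (by simpa using hc) (-d) ?_ |>.imp fun u ⟨hut, hu⟩ => ⟨hut, fun x hx => ?_⟩
    · push Not at hpos
      obtain ⟨j, hj, hcj⟩ := hc
      exact ⟨j, hj, neg_pos.2 ((hpos j hj).lt_of_ne hcj)⟩
    · exact hu x (by simp [neg_mul, sum_neg_distrib, hx])
  rcases le_or_gt d 0 with hd | hd
  · refine ⟨t.filter (0 < c ·), filter_subset _ _, fun x hx hu => ?_⟩
    have := sum_mul_pos_of_pos_iff_pos (fun j hj => (hu j hj).trans (by simp [hj])) hpos
    exact (hx ▸ this).not_ge hd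
  · refine ⟨t.filter (c · < 0), filter_subset _ _, fun x hx hu => ?_⟩
    have := sum_mul_nonpos_of_pos_iff_neg (c := c) fun j hj => (hu j hj).trans (by simp [hj])
    exact (hx ▸ this).not_gt hd

end SignPatterns

theorem card_le_finrank_of_forall_subset_exists_pos_iff {𝕜 ι V : Type*} [Field 𝕜] [LinearOrder 𝕜]
    [IsStrictOrderedRing 𝕜] [AddCommGroup V] [Module 𝕜 V] [FiniteDimensional 𝕜 V]
    (ℓ : ι → Dual 𝕜 V) (b : ι → 𝕜) (t : Finset ι)
    (h : ∀ u ⊆ t, ∃ v : V, ∀ j ∈ t, (0 < ℓ j v + b j ↔ j ∈ u)) : #t ≤ finrank 𝕜 V := by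
  by_contra! hcard
  have hdep : ¬ LinearIndepOn 𝕜 ℓ (t : Set ι) := fun hli =>
    hcard.not_ge (by simpa using hli.fintype_card_le_finrank)
  obtain ⟨c, hrel, hc⟩ := not_linearIndepOn_finset_iff.1 hdep
  have hconst : ∀ v : V, ∑ j ∈ t, c j * (ℓ j v + b j) = ∑ j ∈ t, c j * b j := fun v => by
    have hrel_v := congrArg (· v) hrel
    simp only [LinearMap.coe_sum, LinearMap.coe_smul, Finset.sum_apply, Pi.smul_apply, smul_eq_mul,
      LinearMap.zero_apply] at hrel_v
    simp [mul_add, sum_add_distrib, hrel_v]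
  obtain ⟨u, hut, hu⟩ := exists_sign_pattern_not_realized t c hc (∑ j ∈ t, c j * b j)
  obtain ⟨v, hv⟩ := h u hut
  exact hu _ (hconst v) hv

theorem ncard_le_sum_choose_of_card_le {ι : Type*} [Fintype ι] (S : Set (ι → Bool)) (k : ℕ)
    (h : ∀ t : Finset ι, (∀ u ⊆ t, ∃ s ∈ S, ∀ j ∈ t, (s j = true ↔ j ∈ u)) → #t ≤ k) :
    S.ncard ≤ ∑ i ∈ range (k + 1), (Fintype.card ι).choose i := by
  classical
  set trueSet : (ι → Bool) → Finset ι := fun s => univ.filter (s · = true)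
  have htrueSet : Function.Injective trueSet := fun s s' hss' => funext fun j => by
    simpa [trueSet] using congrArg (j ∈ ·) hss'
  set 𝒜 := S.toFinset.image trueSet
  have hvc : 𝒜.vcDim ≤ k := Finset.sup_le fun t ht => h t fun u hu => by
    obtain ⟨_, hA, htA⟩ := (mem_shatterer.1 ht) hu
    obtain ⟨s, hs, rfl⟩ := mem_image.1 hA
    exact ⟨s, Set.mem_toFinset.1 hs, fun j hj => by simp [trueSet, ← htA, hj]⟩
  calc S.ncard = #𝒜 := by rw [Set.ncard_eq_toFinset_card', card_image_of_injective _ htrueSet]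
    _ ≤ #𝒜.shatterer := card_le_card_shatterer 𝒜
    _ ≤ ∑ i ∈ Iic 𝒜.vcDim, (Fintype.card ι).choose i := card_shatterer_le_sum_vcDim
    _ ≤ ∑ i ∈ Iic k, (Fintype.card ι).choose i := sum_le_sum_of_subset (Iic_subset_Iic.2 hvc)
    _ = ∑ i ∈ range (k + 1), (Fintype.card ι).choose i := by rw [Nat.range_succ_eq_Iic]

/-- The number of regions cut out by `J` affine hyperplanes in `ℝ^I`.
For vectors `W_1, …, W_J ∈ ℝ^I` and `b ∈ ℝ^J`, the number of distinct sign vectors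
`(𝟙[W_1ᵀ v + b_1 > 0], …, 𝟙[W_Jᵀ v + b_J > 0])` realized as `v` ranges over `ℝ^I`
is at most `∑_{i=0}^{I} C(J, i)`. -/
theorem card_sign_patterns_le {I J : ℕ} (W : Fin J → (Fin I → ℝ)) (b : Fin J → ℝ) :
    Set.ncard {s : Fin J → Bool |
        ∃ v : Fin I → ℝ, ∀ j : Fin J, s j = decide (0 < W j ⬝ᵥ v + b j)}
      ≤ ∑ i ∈ Finset.range (I + 1), Nat.choose J i := by
  refine (ncard_le_sum_choose_of_card_le _ I fun t ht => ?_).trans_eq (by simp)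
  simpa using card_le_finrank_of_forall_subset_exists_pos_iff
    (fun j => dotProductBilin ℝ ℝ (W j)) b t fun u hu => by
      obtain ⟨s, ⟨v, hv⟩, hsu⟩ := ht u hu
      exact ⟨v, fun j hj => by simpa [hv j] using hsu j hj⟩
end
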